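/- For every integer i ≥ 3, the antichain 𝒲_i = {W_{i,q} : q ≥ 3} is fundamental: the class incl(𝒲_i) of all graphs G such that G ⋖ W_{i,q} for some q ≥ 3 and G is not isomorphic to W_{i,q}, is well-quasi-ordered by the contraction relation ⋖. -/

import Mathlib

open SimpleGraph

/-- A contraction model of a graph `H` in a graph `G`: a map sending each vertex of `H`
to a connected subset of vertices of `G`, these subsets partitioning the vertices of `G`,
with distinct vertices of `H` adjacent iff the corresponding subsets are joined by an
edge of `G`. -/
def IsContractionModel {V W : Type*} (G : SimpleGraph V) (H : SimpleGraph W)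
    (φ : W → Set V) : Prop :=
  (∀ w : W, (G.induce (φ w)).Connected) ∧
  (∀ v : V, ∃! w : W, v ∈ φ w) ∧
  ∀ w w' : W, w ≠ w' →
    (H.Adj w w' ↔ ∃ a ∈ φ w, ∃ b ∈ φ w', G.Adj a b)

/-- `H` is a contraction of `G`: there is a contraction model of `H` in `G`
(equivalently, `H` can be obtained from `G` by a sequence of edge contractions). -/
def IsContraction {V W : Type*} (H : SimpleGraph W) (G : SimpleGraph V) : Prop :=
  ∃ φ : W → Set V, IsContractionModel G H φ

/-- The graph `D_r`: two adjacent vertices together with `r` further vertices,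
each adjacent to exactly the first two. `D_2` is the diamond (`K₄` minus an edge). -/
def Dgraph (r : ℕ) : SimpleGraph (Fin 2 ⊕ Fin r) :=
  SimpleGraph.fromRel (fun x _ => x.isLeft)

/-- Finite graphs, with vertex set `Fin n` for some `n`. -/
def FinGraph : Type := Σ n : ℕ, SimpleGraph (Fin n)

/-- The contraction relation on finite graphs. -/
def FinGraph.Contr (H G : FinGraph) : Prop := IsContraction H.2 G.2

/-- A set of finite graphs is well-quasi-ordered by the contraction relation if every
infinite sequence of its members contains two graphs, the earlier being a contraction
of the later. -/
def WqoByContraction (S : Set FinGraph) : Prop :=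
  ∀ f : ℕ → FinGraph, (∀ k, f k ∈ S) → ∃ i j : ℕ, i < j ∧ FinGraph.Contr (f i) (f j)

/-- The graph `W_{p,q}`: the disjoint union of `p` isolated vertices (`Sum.inr ∘ Sum.inl`)
and the complete bipartite graph `K_{2,q}` (`Sum.inr ∘ Sum.inr`), together with two
non-adjacent poles (`Sum.inl`) adjacent to all the other `p + q + 2` vertices. -/
def Wgraph (p q : ℕ) : SimpleGraph (Fin 2 ⊕ (Fin p ⊕ (Fin 2 ⊕ Fin q))) :=
  SimpleGraph.fromRel (fun x y =>
    (x.isLeft ∧ y.isRight) ∨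
    (∃ (s : Fin 2) (t : Fin q),
      x = Sum.inr (Sum.inr (Sum.inl s)) ∧ y = Sum.inr (Sum.inr (Sum.inr t))))

/-!
`W_{p,q}` consists of a core, the 4-cycle formed by the two poles and the two centres of
`K_{2,q}`, together with `p` vertices joined to the poles and `q` vertices joined to the whole
core; in both groups the vertices are pairwise non-adjacent. Since every edge meets the core, a
branch set of a contraction either meets the core or is a single outer vertex. Hence every
contraction of `W_{p,q}` has the same shape: a core with at most four vertices (the images of
the old one), at most `p` vertices joined to a fixed set of core vertices, and some number `m`
of vertices joined to the whole core.

If the contraction is proper, the two poles or the two centres are merged or made adjacent, for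
otherwise every branch set is a singleton. The image of that pole (or centre) is then adjacent
to all other core vertices, and extra vertices joined to the whole core can be contracted into
it. So a proper contraction of `W_{p,q}` is determined up to isomorphism by finitely much
data plus the number `m`, and among infinitely many such graphs, two share the finite data with
`m` non-decreasing, the first being then a contraction of the second.
-/

theorem SimpleGraph.induce_connected_of_forall_adj {V : Type*} {G : SimpleGraph V} {s : Set V}
    {x : V} (hx : x ∈ s) (h : ∀ y ∈ s, y ≠ x → G.Adj x y) : (G.induce s).Connected := by
  refine (connected_iff_exists_forall_reachable _).2 ⟨⟨x, hx⟩, fun ⟨y, hy⟩ => ?_⟩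
  obtain rfl | hne := eq_or_ne y x
  · rfl
  · exact Adj.reachable (h y hy hne)

namespace IsContractionModel

variable {V W : Type*} {G : SimpleGraph V} {H : SimpleGraph W} {φ : W → Set V}

theorem of_fibers {π : V → W} (hconn : ∀ w, (G.induce (π ⁻¹' {w})).Connected)
    (hadj : ∀ w w', w ≠ w' → (H.Adj w w' ↔ ∃ a b, π a = w ∧ π b = w' ∧ G.Adj a b)) :
    IsContractionModel G H (fun w => π ⁻¹' {w}) := by
  refine ⟨hconn, fun v => ⟨π v, rfl, fun w hw => hw.symm⟩, fun w w' hne => ?_⟩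
  simp only [hadj w w' hne, Set.mem_preimage, Set.mem_singleton_iff]
  aesop

variable (hM : IsContractionModel G H φ)

/-- The vertex of `H` whose branch set contains `v`. -/
noncomputable def proj (v : V) : W := (hM.2.1 v).choose

theorem mem_iff_proj_eq {v : V} {w : W} : v ∈ φ w ↔ hM.proj v = w :=
  ⟨fun h => ((hM.2.1 v).choose_spec.2 w h).symm, fun h => h ▸ (hM.2.1 v).choose_spec.1⟩

theorem proj_surjective : Function.Surjective hM.proj := fun w => by
  obtain ⟨⟨v, hv⟩⟩ := (hM.1 w).nonempty
  exact ⟨v, hM.mem_iff_proj_eq.1 hv⟩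

theorem adj_iff {w w' : W} (hne : w ≠ w') :
    H.Adj w w' ↔ ∃ a b, hM.proj a = w ∧ hM.proj b = w' ∧ G.Adj a b := by
  simp only [hM.2.2 w w' hne, hM.mem_iff_proj_eq]
  aesop

theorem proj_eq_or_adj_of_adj {a b : V} (hab : G.Adj a b) :
    hM.proj a = hM.proj b ∨ H.Adj (hM.proj a) (hM.proj b) :=
  or_iff_not_imp_left.2 fun hne => (hM.adj_iff hne).2 ⟨a, b, rfl, rfl, hab⟩

theorem ne_and_not_adj_of_proj_eq {y a b : V} (hy : hM.proj y = hM.proj a)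
    (hsep : ¬(hM.proj a = hM.proj b ∨ H.Adj (hM.proj a) (hM.proj b))) :
    y ≠ b ∧ ¬G.Adj y b := by
  refine ⟨?_, fun h => hsep (hy ▸ hM.proj_eq_or_adj_of_adj h)⟩
  rintro rfl
  exact hsep (.inl hy.symm)

theorem exists_adj_of_proj_eq {a b : V} (h : hM.proj a = hM.proj b) (hne : a ≠ b) :
    ∃ c, hM.proj c = hM.proj a ∧ G.Adj a c := by
  have ha : a ∈ φ (hM.proj a) := hM.mem_iff_proj_eq.2 rfl
  have hb : b ∈ φ (hM.proj a) := hM.mem_iff_proj_eq.2 h.symm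
  obtain ⟨walk⟩ := (hM.1 _).preconnected ⟨a, ha⟩ ⟨b, hb⟩
  cases walk with
  | nil => exact absurd rfl hne
  | cons hadj _ => exact ⟨_, hM.mem_iff_proj_eq.1 (Subtype.prop _), hadj⟩

noncomputable def isoOfInjective (hinj : Function.Injective hM.proj) : G ≃g H where
  toEquiv := Equiv.ofBijective hM.proj ⟨hinj, hM.proj_surjective⟩
  map_rel_iff' {a b} := by
    change H.Adj (hM.proj a) (hM.proj b) ↔ G.Adj a b
    refine ⟨fun h => ?_, fun h => (hM.proj_eq_or_adj_of_adj h).resolve_left (hinj.ne h.ne)⟩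
    obtain ⟨a', b', ha, hb, hab⟩ := (hM.adj_iff h.ne).1 h
    rwa [← hinj ha, ← hinj hb]

end IsContractionModel

theorem IsContraction.congr {V V' W W' : Type*} {G : SimpleGraph V} {G' : SimpleGraph V'}
    {H : SimpleGraph W} {H' : SimpleGraph W'} (eH : H ≃g H') (eG : G ≃g G')
    (h : IsContraction H' G') : IsContraction H G := by
  obtain ⟨φ, hM⟩ := h
  let π : V → W := eH.symm ∘ hM.proj ∘ eG
  refine ⟨_, IsContractionModel.of_fibers (π := π) (fun w => ?_) (fun w w' hne => ?_)⟩
  · have hfiber : π ⁻¹' {w} = eG ⁻¹' φ (eH w) := by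
      ext v
      simp [π, hM.mem_iff_proj_eq, RelIso.symm_apply_eq]
    let e : G.induce (eG ⁻¹' φ (eH w)) ≃g G'.induce (φ (eH w)) :=
      ⟨eG.toEquiv.subtypeEquiv fun _ => Iff.rfl, eG.map_adj_iff⟩
    rw [hfiber]
    exact e.connected_iff.2 (hM.1 _)
  · rw [← eH.map_adj_iff, hM.adj_iff (eH.injective.ne hne)]
    constructor
    · rintro ⟨a, b, ha, hb, hab⟩
      exact ⟨eG.symm a, eG.symm b, by simp [π, ha], by simp [π, hb], eG.symm.map_adj_iff.2 hab⟩
    · rintro ⟨a, b, rfl, rfl, hab⟩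
      exact ⟨eG a, eG b, by simp [π], by simp [π], eG.map_adj_iff.2 hab⟩

section CoreJoin

variable {α α' κ' μ' ν : Type*}

def coreJoin (B : SimpleGraph α) (P : Set α) (κ μ : Type*) : SimpleGraph (α ⊕ (κ ⊕ μ)) where
  Adj
    | .inl x, .inl y => B.Adj x y
    | .inl x, .inr (.inl _) | .inr (.inl _), .inl x => x ∈ P
    | .inl _, .inr (.inr _) | .inr (.inr _), .inl _ => True
    | .inr _, .inr _ => False
  symm := ⟨by rintro (x | u | t) (y | u' | t') h <;> first | exact B.adj_symm h | exact h⟩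
  loopless := ⟨by rintro (x | u | t) h; exacts [B.loopless.irrefl x h, h, h]⟩

variable {κ μ : Type*} {B : SimpleGraph α} {P : Set α}

@[simp] theorem coreJoin_adj_inl_inl {x y : α} :
    (coreJoin B P κ μ).Adj (.inl x) (.inl y) ↔ B.Adj x y := .rfl
@[simp] theorem coreJoin_adj_inl_inr_inl {x : α} {u : κ} :
    (coreJoin B P κ μ).Adj (.inl x) (.inr (.inl u)) ↔ x ∈ P := .rfl
@[simp] theorem coreJoin_adj_inr_inl_inl {x : α} {u : κ} :
    (coreJoin B P κ μ).Adj (.inr (.inl u)) (.inl x) ↔ x ∈ P := .rfl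
@[simp] theorem coreJoin_adj_inl_inr_inr {x : α} {t : μ} :
    (coreJoin B P κ μ).Adj (.inl x) (.inr (.inr t)) := trivial
@[simp] theorem coreJoin_adj_inr_inr_inl {x : α} {t : μ} :
    (coreJoin B P κ μ).Adj (.inr (.inr t)) (.inl x) := trivial
@[simp] theorem coreJoin_not_adj_inr_inr {a b : κ ⊕ μ} :
    ¬(coreJoin B P κ μ).Adj (.inr a) (.inr b) := by
  rcases a with _ | _ <;> rcases b with _ | _ <;> exact id

def coreJoinCongr {B' : SimpleGraph α'} {P' : Set α'} (eB : B ≃g B')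
    (hP : ∀ x, eB x ∈ P' ↔ x ∈ P) (eκ : κ ≃ κ') (eμ : μ ≃ μ') :
    coreJoin B P κ μ ≃g coreJoin B' P' κ' μ' where
  toEquiv := eB.toEquiv.sumCongr (eκ.sumCongr eμ)
  map_rel_iff' {a b} := by
    rcases a with x | u | t <;> rcases b with y | u' | t' <;> simp [hP, eB.map_adj_iff]

/-- The vertices of `ν` are contracted into the dominating core vertex `x₀`. -/
theorem isContraction_coreJoin_sum {x₀ : α} (hx₀ : ∀ y, y ≠ x₀ → B.Adj x₀ y) :
    IsContraction (coreJoin B P κ μ) (coreJoin B P κ (μ ⊕ ν)) := by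
  let π : α ⊕ (κ ⊕ (μ ⊕ ν)) → α ⊕ (κ ⊕ μ) :=
    Sum.elim .inl (Sum.elim (.inr ∘ .inl) (Sum.elim (.inr ∘ .inr) fun _ => .inl x₀))
  let σ : α ⊕ (κ ⊕ μ) → α ⊕ (κ ⊕ (μ ⊕ ν)) := Sum.map id (Sum.map id .inl)
  have hσ : ∀ w, π (σ w) = w := by rintro (x | u | t) <;> rfl
  have hσ_adj : ∀ w w',
      (coreJoin B P κ (μ ⊕ ν)).Adj (σ w) (σ w') ↔ (coreJoin B P κ μ).Adj w w' := by
    rintro (x | u | t) (y | u' | t') <;> simp [σ]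
  have hhub : ∀ w y, π y = w → y ≠ σ w → (coreJoin B P κ (μ ⊕ ν)).Adj (σ w) y := by
    rintro w (x | u | t | n) rfl hne <;> simp_all [π, σ]
  have hπ_adj : ∀ a b, π a ≠ π b → (coreJoin B P κ (μ ⊕ ν)).Adj a b →
      (coreJoin B P κ μ).Adj (π a) (π b) := by
    rintro (x | u | t | n) (y | u' | t' | n') hne hab
    all_goals simp only [π, Sum.elim_inl, Sum.elim_inr, Function.comp_apply, ne_eq,
      Sum.inl.injEq] at hne ⊢
    all_goals first
      | exact hab | trivial | exact absurd hab coreJoin_not_adj_inr_inr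
      | exact (hx₀ _ hne).symm | exact hx₀ _ (Ne.symm hne)
  refine ⟨_, IsContractionModel.of_fibers (π := π) (fun w => ?_) (fun w w' hne => ?_)⟩
  · exact induce_connected_of_forall_adj (hσ w) fun y hy hne => hhub w y hy hne
  · constructor
    · exact fun h => ⟨σ w, σ w', hσ w, hσ w', (hσ_adj w w').2 h⟩
    · rintro ⟨a, b, rfl, rfl, hab⟩
      exact hπ_adj a b hne hab

theorem isContraction_coreJoin_fin {x₀ : α} (hx₀ : ∀ y, y ≠ x₀ → B.Adj x₀ y) {m m' : ℕ}
    (h : m ≤ m') : IsContraction (coreJoin B P κ (Fin m)) (coreJoin B P κ (Fin m')) :=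
  (isContraction_coreJoin_sum (ν := Fin (m' - m)) hx₀).congr .refl <|
    coreJoinCongr .refl (fun _ => .rfl) (.refl κ) (finSumFinEquiv.trans (finCongr (by omega))).symm

theorem exists_iso_coreJoin_fin {V : Type*} [Fintype α] [Fintype κ] [Fintype μ]
    {H : SimpleGraph V} (eH : H ≃g coreJoin B P κ μ) {x₀ : α}
    (hx₀ : ∀ y, y ≠ x₀ → B.Adj x₀ y) :
    ∃ (B' : SimpleGraph (Fin (Fintype.card α))) (P' : Set (Fin (Fintype.card α))),
      (∃ x₀, ∀ y, y ≠ x₀ → B'.Adj x₀ y) ∧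
      Nonempty (H ≃g coreJoin B' P' (Fin (Fintype.card κ)) (Fin (Fintype.card μ))) := by
  let e := Fintype.equivFin α
  refine ⟨B.map e.toEmbedding, e '' P, ⟨e x₀, fun y hy => ?_⟩, ⟨eH.trans <|
    coreJoinCongr (.map e B) (fun _ => e.injective.mem_set_image) (Fintype.equivFin κ)
      (Fintype.equivFin μ)⟩⟩
  rw [← e.apply_symm_apply y] at hy ⊢
  exact (Iso.map e B).map_adj_iff.2 (hx₀ _ fun h => hy (h ▸ rfl))

end CoreJoin

namespace IsContractionModel

section CoreImage

variable {α β W : Type*} {G : SimpleGraph (α ⊕ β)} {H : SimpleGraph W} {φ : W → Set (α ⊕ β)}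

def coreImage (hM : IsContractionModel G H φ) : Set W := Set.range (hM.proj ∘ .inl)

end CoreImage

variable {α κ μ W : Type*} {B : SimpleGraph α} {P : Set α} {H : SimpleGraph W}
  {φ : W → Set (α ⊕ (κ ⊕ μ))} (hM : IsContractionModel (coreJoin B P κ μ) H φ)

theorem eq_of_proj_eq_proj_inr {a : κ ⊕ μ} (ha : hM.proj (.inr a) ∉ hM.coreImage) {y}
    (hy : hM.proj y = hM.proj (.inr a)) : y = .inr a := by
  by_contra hne
  obtain ⟨c, hc, hadj⟩ := hM.exists_adj_of_proj_eq hy.symm (Ne.symm hne)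
  rcases c with x | b
  · exact ha ⟨x, hc⟩
  · exact coreJoin_not_adj_inr_inr hadj

theorem adj_proj_inr_iff {c : W} (hc : c ∈ hM.coreImage) {a : κ ⊕ μ}
    (ha : hM.proj (.inr a) ∉ hM.coreImage) :
    H.Adj c (hM.proj (.inr a)) ↔
      ∃ x, hM.proj (.inl x) = c ∧ (coreJoin B P κ μ).Adj (.inl x) (.inr a) := by
  rw [hM.adj_iff (ne_of_mem_of_not_mem hc ha)]
  constructor
  · rintro ⟨x | b, b', rfl, hb', hadj⟩
    · rw [hM.eq_of_proj_eq_proj_inr ha hb'] at hadj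
      exact ⟨x, rfl, hadj⟩
    · rw [hM.eq_of_proj_eq_proj_inr ha hb'] at hadj
      exact absurd hadj coreJoin_not_adj_inr_inr
  · rintro ⟨x, rfl, hadj⟩
    exact ⟨_, _, rfl, rfl, hadj⟩

theorem not_adj_proj_inr_inr {a b : κ ⊕ μ} (ha : hM.proj (.inr a) ∉ hM.coreImage)
    (hb : hM.proj (.inr b) ∉ hM.coreImage) : ¬H.Adj (hM.proj (.inr a)) (hM.proj (.inr b)) := by
  intro h
  obtain ⟨a', b', ha', hb', hadj⟩ := (hM.adj_iff h.ne).1 h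
  rw [hM.eq_of_proj_eq_proj_inr ha ha', hM.eq_of_proj_eq_proj_inr hb hb'] at hadj
  exact coreJoin_not_adj_inr_inr hadj

theorem bijective_coreImage_sum :
    Function.Bijective (Sum.elim (Subtype.val : hM.coreImage → W)
      fun z : {u : κ // hM.proj (.inr (.inl u)) ∉ hM.coreImage} ⊕
          {t : μ // hM.proj (.inr (.inr t)) ∉ hM.coreImage} =>
        hM.proj (.inr (Sum.map Subtype.val Subtype.val z))) := by
  refine ⟨Subtype.val_injective.sumElim (fun z z' h => ?_) fun c z h => ?_, fun w => ?_⟩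
  · rcases z' with ⟨_, hz'⟩ | ⟨_, hz'⟩ <;>
      exact (Subtype.val_injective.sumMap Subtype.val_injective) <| Sum.inr_injective <|
        hM.eq_of_proj_eq_proj_inr hz' h
  · rcases z with ⟨_, hz⟩ | ⟨_, hz⟩ <;> exact hz (h ▸ c.2)
  by_cases hw : w ∈ hM.coreImage
  · exact ⟨.inl ⟨w, hw⟩, rfl⟩
  obtain ⟨x | u | t, rfl⟩ := hM.proj_surjective w
  · exact absurd ⟨x, rfl⟩ hw
  · exact ⟨.inr (.inl ⟨u, hw⟩), rfl⟩
  · exact ⟨.inr (.inr ⟨t, hw⟩), rfl⟩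

theorem nonempty_iso_coreJoin :
    Nonempty (coreJoin (H.induce hM.coreImage) {c | ∃ x ∈ P, hM.proj (.inl x) = c}
      {u : κ // hM.proj (.inr (.inl u)) ∉ hM.coreImage}
      {t : μ // hM.proj (.inr (.inr t)) ∉ hM.coreImage} ≃g H) := by
  let e := Equiv.ofBijective _ hM.bijective_coreImage_sum
  refine ⟨⟨e, fun {a b} => ?_⟩⟩
  have hcross : ∀ c z, H.Adj (e (.inl c)) (e (.inr z)) ↔
      (coreJoin (H.induce hM.coreImage) {c | ∃ x ∈ P, hM.proj (.inl x) = c} _ _).Adj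
        (.inl c) (.inr z) := by
    rintro c (⟨u, hz⟩ | ⟨t, hz⟩) <;>
      simp only [e, Equiv.ofBijective_apply, Sum.elim_inl, Sum.elim_inr, Sum.map_inl,
        Sum.map_inr, hM.adj_proj_inr_iff c.2 hz]
    · simp [and_comm]
    · obtain ⟨x₀, hx₀⟩ := c.2
      simpa using ⟨x₀, hx₀⟩
  rcases a with c | z <;> rcases b with c' | z'
  · exact .rfl
  · exact hcross c z'
  · exact (H.adj_comm _ _).trans ((hcross c' z).trans ((coreJoin _ _ _ _).adj_comm _ _))
  · rcases z with ⟨_, hz⟩ | ⟨_, hz⟩ <;> rcases z' with ⟨_, hz'⟩ | ⟨_, hz'⟩ <;>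
      simpa [e] using hM.not_adj_proj_inr_inr hz hz'

end IsContractionModel

/-- `Wgraph p q` with its `p` isolated vertices indexed by `κ` and its `q` leaves of `K_{2,q}`
indexed by `μ`: `.inl (.inl j)` are the poles and `.inl (.inr s)` the centres. -/
abbrev WgraphOn (κ μ : Type*) : SimpleGraph ((Fin 2 ⊕ Fin 2) ⊕ (κ ⊕ μ)) :=
  coreJoin (completeBipartiteGraph (Fin 2) (Fin 2)) (Set.range Sum.inl) κ μ

def Wgraph.isoWgraphOn (p q : ℕ) : Wgraph p q ≃g WgraphOn (Fin p) (Fin q) where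
  toFun := Sum.elim (.inl ∘ .inl) (Sum.elim (.inr ∘ .inl) (Sum.elim (.inl ∘ .inr) (.inr ∘ .inr)))
  invFun :=
    Sum.elim (Sum.elim .inl (.inr ∘ .inr ∘ .inl)) (Sum.elim (.inr ∘ .inl) (.inr ∘ .inr ∘ .inr))
  left_inv := by rintro (j | u | s | t) <;> rfl
  right_inv := by rintro ((j | s) | u | t) <;> rfl
  map_rel_iff' {a b} := by
    rcases a with j | u | s | t <;> rcases b with j' | u' | s' | t' <;>
      simp [Wgraph, -Fin.exists_fin_two]

theorem completeBipartiteGraph_fin_two_adj_of_not_adj {a b c : Fin 2 ⊕ Fin 2} (hab : a ≠ b)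
    (h : ¬(completeBipartiteGraph (Fin 2) (Fin 2)).Adj a b) (hca : c ≠ a) (hcb : c ≠ b) :
    (completeBipartiteGraph (Fin 2) (Fin 2)).Adj a c := by
  revert a b c
  simp only [completeBipartiteGraph_adj]
  decide

namespace WgraphOn

variable {κ μ : Type*}

theorem eq_of_not_adj_pole {j j' : Fin 2} (hj : j ≠ j') {y : (Fin 2 ⊕ Fin 2) ⊕ (κ ⊕ μ)}
    (hy : y ≠ .inl (.inl j')) (hadj : ¬(WgraphOn κ μ).Adj y (.inl (.inl j'))) :
    y = .inl (.inl j) := by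
  rcases y with (j'' | s) | u | t
  · have : j'' ≠ j' := by simpa using hy
    congr 2
    omega
  all_goals simp at hadj

theorem eq_or_exists_eq_of_not_adj_centre {s s' : Fin 2} (hs : s ≠ s')
    {y : (Fin 2 ⊕ Fin 2) ⊕ (κ ⊕ μ)} (hy : y ≠ .inl (.inr s'))
    (hadj : ¬(WgraphOn κ μ).Adj y (.inl (.inr s'))) :
    y = .inl (.inr s) ∨ ∃ u, y = .inr (.inl u) := by
  rcases y with (j | s'') | u | t
  · simp at hadj
  · have : s'' ≠ s' := by simpa using hy
    left
    congr 2
    omega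
  · exact .inr ⟨u, rfl⟩
  · simp at hadj

theorem exists_eq_pole_of_adj {u : κ} {c : (Fin 2 ⊕ Fin 2) ⊕ (κ ⊕ μ)}
    (h : (WgraphOn κ μ).Adj (.inr (.inl u)) c) : ∃ j, c = .inl (.inl j) := by
  rcases c with (j | s) | _
  · exact ⟨j, rfl⟩
  · simp at h
  · exact absurd h coreJoin_not_adj_inr_inr

end WgraphOn

namespace IsContractionModel

variable {κ μ W : Type*} {H : SimpleGraph W} {φ : W → Set ((Fin 2 ⊕ Fin 2) ⊕ (κ ⊕ μ))}
  (hM : IsContractionModel (WgraphOn κ μ) H φ)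

theorem proj_injective_of_separated
    (hsep : ∀ a b, a ≠ b → ¬(completeBipartiteGraph (Fin 2) (Fin 2)).Adj a b →
      ¬(hM.proj (.inl a) = hM.proj (.inl b) ∨ H.Adj (hM.proj (.inl a)) (hM.proj (.inl b)))) :
    Function.Injective hM.proj := by
  have hpole : ∀ j y, hM.proj y = hM.proj (.inl (.inl j)) → y = .inl (.inl j) := by
    intro j y hy
    obtain ⟨j', hj'⟩ := exists_ne j
    obtain ⟨hne, hnadj⟩ := hM.ne_and_not_adj_of_proj_eq hy
      (hsep _ (.inl j') (by simpa using hj'.symm) (by simp))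
    exact WgraphOn.eq_of_not_adj_pole hj'.symm hne hnadj
  have hcentre : ∀ s y, hM.proj y = hM.proj (.inl (.inr s)) → y = .inl (.inr s) := by
    intro s y hy
    obtain ⟨s', hs'⟩ := exists_ne s
    obtain ⟨hne, hnadj⟩ := hM.ne_and_not_adj_of_proj_eq hy
      (hsep _ (.inr s') (by simpa using hs'.symm) (by simp))
    obtain h | ⟨u, rfl⟩ := WgraphOn.eq_or_exists_eq_of_not_adj_centre hs'.symm hne hnadj
    · exact h
    · -- a neighbour of `u` in the centre's branch set would be a pole, with a singleton branch set
      obtain ⟨c, hc, hadj⟩ := hM.exists_adj_of_proj_eq hy (by simp)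
      obtain ⟨j, rfl⟩ := WgraphOn.exists_eq_pole_of_adj hadj
      simpa using hpole j _ (hc.trans hy).symm
  have hcore : ∀ a y, hM.proj y = hM.proj (.inl a) → y = .inl a := by
    rintro (j | s)
    exacts [hpole j, hcentre s]
  intro y y' h
  by_cases hy' : hM.proj y' ∈ hM.coreImage
  · obtain ⟨a, ha⟩ := hy'
    rw [hcore a y (h.trans ha.symm), hcore a y' ha.symm]
  · rcases y' with a | b
    · exact absurd ⟨a, rfl⟩ hy'
    · exact hM.eq_of_proj_eq_proj_inr hy' h

/-- If two core vertices on the same side are merged or joined, the first one dominates the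
image of the core; otherwise every branch set is a singleton. -/
theorem exists_dominating_of_isEmpty_iso (hH : IsEmpty (WgraphOn κ μ ≃g H)) :
    ∃ x₀ : hM.coreImage, ∀ y, y ≠ x₀ → (H.induce hM.coreImage).Adj x₀ y := by
  by_contra! hdom
  refine hH.false (hM.isoOfInjective (hM.proj_injective_of_separated ?_))
  intro a b hab hnadj hmerge
  obtain ⟨⟨_, c, rfl⟩, hc, hnadj'⟩ := hdom ⟨hM.proj (.inl a), a, rfl⟩
  have hc : hM.proj (.inl c) ≠ hM.proj (.inl a) := fun h => hc (Subtype.ext h)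
  apply hnadj'
  by_cases hcb : c = b
  · subst hcb
    exact hmerge.resolve_left hc.symm
  · have hca : c ≠ a := by rintro rfl; exact hc rfl
    exact (hM.proj_eq_or_adj_of_adj (coreJoin_adj_inl_inl.2
      (completeBipartiteGraph_fin_two_adj_of_not_adj hab hnadj hca hcb))).resolve_left hc.symm

end IsContractionModel

theorem exists_iso_coreJoin_of_isContraction_wgraph {n p q : ℕ} {H : SimpleGraph (Fin n)}
    (hH : IsContraction H (Wgraph p q)) (hniso : ¬Nonempty (H ≃g Wgraph p q)) :
    ∃ (s k m : ℕ) (B : SimpleGraph (Fin s)) (P : Set (Fin s)), s ≤ 4 ∧ k ≤ p ∧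
      (∃ x₀, ∀ y, y ≠ x₀ → B.Adj x₀ y) ∧ Nonempty (H ≃g coreJoin B P (Fin k) (Fin m)) := by
  classical
  obtain ⟨φ, hM⟩ := hH.congr .refl (Wgraph.isoWgraphOn p q).symm
  obtain ⟨c₀, hdom⟩ := hM.exists_dominating_of_isEmpty_iso
    ⟨fun e => hniso ⟨((Wgraph.isoWgraphOn p q).trans e).symm⟩⟩
  obtain ⟨e⟩ := hM.nonempty_iso_coreJoin
  obtain ⟨B', P', hdom', he'⟩ := exists_iso_coreJoin_fin e.symm hdom
  refine ⟨_, _, _, B', P', ?_, (Fintype.card_subtype_le _).trans_eq (Fintype.card_fin p),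
    hdom', he'⟩
  have hsurj : Function.Surjective fun a : Fin 2 ⊕ Fin 2 => (⟨_, a, rfl⟩ : hM.coreImage) := by
    rintro ⟨_, a, rfl⟩
    exact ⟨a, rfl⟩
  exact (Fintype.card_le_of_surjective _ hsurj).trans (by simp)

theorem WqoByContraction.of_forall_exists {S : Set FinGraph} {D : Type*} [Finite D]
    (R : D → ℕ → FinGraph → Prop)
    (hR : ∀ d m m' G G', m ≤ m' → R d m G → R d m' G' → FinGraph.Contr G G')
    (hS : ∀ G ∈ S, ∃ d m, R d m G) : WqoByContraction S := by
  intro G hG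
  choose d m hdm using fun j => hS (G j) (hG j)
  obtain ⟨j₀, j₁, hlt, hd, hm⟩ :=
    (Finite.wellQuasiOrdered (· = ·)).prod wellQuasiOrdered_le fun j => (d j, m j)
  have hd : d j₀ = d j₁ := hd
  exact ⟨j₀, j₁, hlt, hR _ _ _ _ _ hm (hdm j₀) (hd ▸ hdm j₁)⟩

theorem wqoByContraction_of_forall_iso_coreJoin (N : ℕ) {S : Set FinGraph}
    (hS : ∀ G ∈ S, ∃ (s k m : ℕ) (B : SimpleGraph (Fin s)) (P : Set (Fin s)), s ≤ N ∧ k ≤ N ∧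
      (∃ x₀, ∀ y, y ≠ x₀ → B.Adj x₀ y) ∧ Nonempty (G.2 ≃g coreJoin B P (Fin k) (Fin m))) :
    WqoByContraction S := by
  let D := Σ s : Fin (N + 1),
    {BP : SimpleGraph (Fin s) × Set (Fin s) // ∃ x₀, ∀ y, y ≠ x₀ → BP.1.Adj x₀ y} × Fin (N + 1)
  refine WqoByContraction.of_forall_exists (D := D)
    (fun d m G => Nonempty (G.2 ≃g coreJoin d.2.1.1.1 d.2.1.1.2 (Fin d.2.2) (Fin m)))
    (fun d m m' G G' hm ⟨e⟩ ⟨e'⟩ => ?_) fun G hG => ?_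
  · obtain ⟨x₀, hx₀⟩ := d.2.1.2
    exact (isContraction_coreJoin_fin hx₀ hm).congr e e'
  · obtain ⟨s, k, m, B, P, hs, hk, hdom, he⟩ := hS G hG
    exact ⟨⟨⟨s, by omega⟩, ⟨(B, P), hdom⟩, ⟨k, by omega⟩⟩, m, he⟩

theorem Wgraph_antichain_fundamental_general (i : ℕ) :
    WqoByContraction {G : FinGraph |
      ∃ q : ℕ, 3 ≤ q ∧ IsContraction G.2 (Wgraph i q) ∧
        ¬ Nonempty (G.2 ≃g Wgraph i q)} := by
  refine wqoByContraction_of_forall_iso_coreJoin (i + 4) fun G ⟨_, _, hG, hniso⟩ => ?_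
  obtain ⟨s, k, m, B, P, hs, hk, hdom, he⟩ := exists_iso_coreJoin_of_isContraction_wgraph hG hniso
  exact ⟨s, k, m, B, P, by omega, by omega, hdom, he⟩

/-- For every `i ≥ 3`, the antichain `𝒲_i = {W_{i,q} : q ≥ 3}` is
fundamental: the class of all graphs that are a contraction of some `W_{i,q}` (`q ≥ 3`)
without being isomorphic to it is well-quasi-ordered by the contraction relation. -/
theorem Wgraph_antichain_fundamental (i : ℕ) (hi : 3 ≤ i) :
    WqoByContraction {G : FinGraph |
      ∃ q : ℕ, 3 ≤ q ∧ IsContraction G.2 (Wgraph i q) ∧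
        ¬ Nonempty (G.2 ≃g Wgraph i q)} :=
  Wgraph_antichain_fundamental_general i
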